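/- arXiv:2605.21780 — 5 statements merged into one kernel-verified Lean document; each statement's English description precedes it below -/
import Mathlib

section
/- Let M be a randomized mechanism mapping inputs in a set 𝒳 to probability measures on a measurable space Z, and let φ_1,…,φ_C : Z → [0,1] be measurable functions with Σ_{i=1}^C φ_i ≡ 1; define smoothed class probabilities p_i(X) = E_{z∼M(X)}[φ_i(z)] and the smoothed classifier g(X) = argmax_{1≤i≤C} p_i(X). Let ≈_ρ be a relation on 𝒳 that decomposes as the union of relations ≈_{ρ_1},…,≈_{ρ_N} (i.e., X ≈_ρ X' iff X ≈_{ρ_i} X' for some i), and let δ_i : ℝ → [0,1] be the privacy profile of M with respect to ≈_{ρ_i}. Fix an input X with g(X) = c_1, and suppose p_1, p_2 ∈ [0,1] satisfy p_1 > p_2, E_{z∼M(X)}[φ_{c_1}(z)] ≥ p_1, and E_{z∼M(X)}[φ_i(z)] ≤ p_2 for every i ≠ c_1. If min_{1≤i≤N} [ sup_{ε∈ℝ} e^{−ε}(p_1 − δ_i(ε)) + sup_{ε∈ℝ} e^{−ε}(1 − p_2 − δ_i(ε)) ] > 1, then g(X') = g(X) for every X' with X ≈_ρ X'. -/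
/-!
If `X ≈_{ρ_i} X'`, every level set `A = {ψ ≥ t}` of a test `ψ : Z → [0,1]` satisfies
`M(X)(A) ≤ e^ε M(X')(A) + δ_i(ε)`, so integrating over `t ∈ (0,1]` (layer cake) gives
`E_{M(X)}[ψ] ≤ e^ε E_{M(X')}[ψ] + δ_i(ε)` for every `ε`. Taking `ψ = φ_{c₁}` and `ψ = 1 - φ_j`
bounds `p_{c₁}(X')` and `1 - p_j(X')` from below by the two suprema; since these sum to more
than `1`, `p_j(X') < p_{c₁}(X')` for every `j ≠ c₁`.
-/

open MeasureTheory Real Set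

noncomputable section

/-- Hockey-stick divergence of order `a > 0`:
`D^HS_a(P‖Q) = sup_A (P(A) − a·Q(A))` over measurable sets `A`. -/
def hsDiv {Z : Type*} [MeasurableSpace Z] (a : ℝ) (P Q : Measure Z) : ℝ :=
  sSup {x : ℝ | ∃ A : Set Z, MeasurableSet A ∧ x = (P A).toReal - a * (Q A).toReal}

/-- The privacy profile of a mechanism `M` with respect to a neighboring relation `rel`:
`δ(ε) = sup_{X ≈ X'} D^HS_{e^ε}(M(X)‖M(X'))`. -/
def privacyProfile {𝒳 Z : Type*} [MeasurableSpace Z] (M : 𝒳 → Measure Z)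
    (rel : 𝒳 → 𝒳 → Prop) (ε : ℝ) : ℝ :=
  sSup {x : ℝ | ∃ X X' : 𝒳, rel X X' ∧ x = hsDiv (exp ε) (M X) (M X')}

/-- Tradeoff function `Λ(P‖Q)(α)`: the least type-II error
`E_Q[1 − φ]` over measurable tests `φ : Z → [0,1]` with `E_P[φ] = α`. -/
def tradeoff {Z : Type*} [MeasurableSpace Z] (P Q : Measure Z) (α : ℝ) : ℝ :=
  sInf {x : ℝ | ∃ φ : Z → ℝ, Measurable φ ∧ (∀ z, φ z ∈ Icc (0 : ℝ) 1) ∧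
    (∫ z, φ z ∂P) = α ∧ x = ∫ z, (1 - φ z) ∂Q}

/-- `M` satisfies `f`-differential privacy with respect to `rel`. -/
def fDP {𝒳 Z : Type*} [MeasurableSpace Z] (M : 𝒳 → Measure Z)
    (rel : 𝒳 → 𝒳 → Prop) (f : ℝ → ℝ) : Prop :=
  ∀ X X' : 𝒳, rel X X' → ∀ α ∈ Icc (0 : ℝ) 1, f α ≤ tradeoff (M X) (M X') α

/-- A tradeoff function: convex, continuous, non-increasing `[0,1] → [0,1]`
with `f α ≤ 1 − α`. -/
def IsTradeoffFun (f : ℝ → ℝ) : Prop :=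
  ConvexOn ℝ (Icc 0 1) f ∧ ContinuousOn f (Icc 0 1) ∧ AntitoneOn f (Icc 0 1) ∧
    ∀ α ∈ Icc (0 : ℝ) 1, f α ∈ Icc (0 : ℝ) 1 ∧ f α ≤ 1 - α

/-- `f` is the optimal tradeoff function of `M` with respect to `rel`. -/
def IsOptimalTradeoff {𝒳 Z : Type*} [MeasurableSpace Z] (M : 𝒳 → Measure Z)
    (rel : 𝒳 → 𝒳 → Prop) (f : ℝ → ℝ) : Prop :=
  IsTradeoffFun f ∧ fDP M rel f ∧
    ∀ g : ℝ → ℝ, IsTradeoffFun g → fDP M rel g → ∀ α ∈ Icc (0 : ℝ) 1, g α ≤ f α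

/-- Left-continuous inverse of a non-increasing function on `[0,1]`. -/
def leftInv (g : ℝ → ℝ) (α : ℝ) : ℝ :=
  sInf {t : ℝ | t ∈ Icc (0 : ℝ) 1 ∧ g t ≤ α}

/-- Convex conjugate of the `+∞`-extension to `ℝ` of a real-valued function on `[0,1]`:
`h*(s) = sup_{x ∈ [0,1]} (s·x − h(x))`. -/
def conjOn01 (h : ℝ → ℝ) (s : ℝ) : ℝ :=
  sSup {y : ℝ | ∃ x ∈ Icc (0 : ℝ) 1, y = s * x - h x}

section HockeyStick

variable {Z : Type*} [MeasurableSpace Z] {P Q : Measure Z} {a : ℝ}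

lemma measureReal_sub_mul_le_measureReal_univ [IsFiniteMeasure P] (ha : 0 ≤ a) (A : Set Z) :
    P.real A - a * Q.real A ≤ P.real univ := by
  linarith [measureReal_mono (μ := P) (subset_univ A),
    mul_nonneg ha (measureReal_nonneg (μ := Q) (s := A))]

lemma bddAbove_hsDiv [IsFiniteMeasure P] (ha : 0 ≤ a) :
    BddAbove {x : ℝ | ∃ A : Set Z, MeasurableSet A ∧ x = (P A).toReal - a * (Q A).toReal} :=
  ⟨P.real univ, by
    rintro _ ⟨A, -, rfl⟩
    exact measureReal_sub_mul_le_measureReal_univ ha A⟩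

lemma measureReal_sub_mul_le_hsDiv [IsFiniteMeasure P] (ha : 0 ≤ a) {A : Set Z}
    (hA : MeasurableSet A) : P.real A - a * Q.real A ≤ hsDiv a P Q :=
  le_csSup (bddAbove_hsDiv ha) ⟨A, hA, rfl⟩

lemma hsDiv_le_measureReal_univ [IsFiniteMeasure P] (ha : 0 ≤ a) :
    hsDiv a P Q ≤ P.real univ :=
  csSup_le ⟨0, ∅, .empty, by simp⟩ <| by
    rintro _ ⟨A, -, rfl⟩
    exact measureReal_sub_mul_le_measureReal_univ ha A

lemma antitone_measureReal_setOf_le [IsFiniteMeasure P] (ψ : Z → ℝ) :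
    Antitone fun t => P.real {z | t ≤ ψ z} :=
  fun _ _ hst => measureReal_mono fun _ hz => le_trans hst hz

lemma integral_le_mul_integral_add_hsDiv [IsFiniteMeasure P] [IsFiniteMeasure Q]
    (ha : 0 ≤ a) {ψ : Z → ℝ} (hψ : Measurable ψ) (hψ01 : ∀ z, ψ z ∈ Icc (0 : ℝ) 1) :
    ∫ z, ψ z ∂P ≤ a * ∫ z, ψ z ∂Q + hsDiv a P Q := by
  have layer_cake (μ : Measure Z) [IsFiniteMeasure μ] :
      ∫ z, ψ z ∂μ = ∫ t in Ioc (0 : ℝ) 1, μ.real {z | t ≤ ψ z} :=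
    (Integrable.of_mem_Icc 0 1 hψ.aemeasurable (.of_forall hψ01)).integral_eq_integral_Ioc_meas_le
      (.of_forall fun z => (hψ01 z).1) (.of_forall fun z => (hψ01 z).2)
  have tail_integrable (μ : Measure Z) [IsFiniteMeasure μ] :
      IntegrableOn (fun t => μ.real {z | t ≤ ψ z}) (Ioc (0 : ℝ) 1) :=
    ((antitone_measureReal_setOf_le ψ).antitoneOn _).integrableOn_isCompact isCompact_Icc
      |>.mono_set Ioc_subset_Icc_self
  have bound_integrable : IntegrableOn (fun t => a * Q.real {z | t ≤ ψ z} + hsDiv a P Q)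
      (Ioc (0 : ℝ) 1) :=
    ((tail_integrable Q).const_mul a).add (integrableOn_const measure_Ioc_lt_top.ne)
  calc ∫ z, ψ z ∂P
      ≤ ∫ t in Ioc (0 : ℝ) 1, (a * Q.real {z | t ≤ ψ z} + hsDiv a P Q) := by
        rw [layer_cake P]
        refine setIntegral_mono_on (tail_integrable P) bound_integrable measurableSet_Ioc
          fun t _ => ?_
        have : P.real {z | t ≤ ψ z} - a * Q.real {z | t ≤ ψ z} ≤ hsDiv a P Q :=
          measureReal_sub_mul_le_hsDiv ha (hψ measurableSet_Ici)
        linarith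
    _ = a * ∫ z, ψ z ∂Q + hsDiv a P Q := by
        rw [integral_add ((tail_integrable Q).const_mul a)
            (integrableOn_const measure_Ioc_lt_top.ne), integral_const_mul, setIntegral_const, layer_cake Q]
        simp

lemma iSup_exp_neg_mul_le_integral [IsFiniteMeasure P] [IsFiniteMeasure Q]
    {ψ : Z → ℝ} (hψ : Measurable ψ) (hψ01 : ∀ z, ψ z ∈ Icc (0 : ℝ) 1)
    {p : ℝ} (hp : p ≤ ∫ z, ψ z ∂P) {δ : ℝ → ℝ} (hδ : ∀ ε, hsDiv (exp ε) P Q ≤ δ ε) :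
    ⨆ ε, exp (-ε) * (p - δ ε) ≤ ∫ z, ψ z ∂Q :=
  ciSup_le fun ε => by
    rw [exp_neg, inv_mul_le_iff₀ (exp_pos ε)]
    linarith [hδ ε, integral_le_mul_integral_add_hsDiv (P := P) (Q := Q) (exp_pos ε).le hψ hψ01]

end HockeyStick

lemma hsDiv_le_privacyProfile {𝒳 Z : Type*} [MeasurableSpace Z] {M : 𝒳 → Measure Z}
    (hM : ∀ X, IsProbabilityMeasure (M X)) {rel : 𝒳 → 𝒳 → Prop} {X X' : 𝒳}
    (h : rel X X') (ε : ℝ) :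
    hsDiv (exp ε) (M X) (M X') ≤ privacyProfile M rel ε := by
  refine le_csSup ⟨1, ?_⟩ ⟨X, X', h, rfl⟩
  rintro _ ⟨Y, Y', -, rfl⟩
  simpa using hsDiv_le_measureReal_univ (P := M Y) (Q := M Y') (exp_pos ε).le

theorem smoothed_classifier_robust_general
    {𝒳 Z : Type*} [MeasurableSpace Z]
    (M : 𝒳 → Measure Z) (hM : ∀ X, IsProbabilityMeasure (M X))
    (C : ℕ) (φ : Fin C → Z → ℝ)
    (hφmeas : ∀ i, Measurable (φ i))
    (hφrange : ∀ i z, φ i z ∈ Icc (0 : ℝ) 1)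
    (g : 𝒳 → Fin C)
    (hg : ∀ X i, (∫ z, φ i z ∂(M X)) ≤ ∫ z, φ (g X) z ∂(M X))
    (N : ℕ) (relρ : 𝒳 → 𝒳 → Prop) (rels : Fin N → 𝒳 → 𝒳 → Prop)
    (hdecomp : ∀ X X', relρ X X' ↔ ∃ i, rels i X X')
    (δ : Fin N → ℝ → ℝ)
    (hδ : ∀ i ε, δ i ε = privacyProfile M (rels i) ε)
    (X : 𝒳) (c₁ : Fin C)
    (hc₁ : g X = c₁)
    (p₁ p₂ : ℝ)
    (hmaj : p₁ ≤ ∫ z, φ c₁ z ∂(M X))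
    (hmin : ∀ i, i ≠ c₁ → (∫ z, φ i z ∂(M X)) ≤ p₂)
    (hcond : ∀ i : Fin N,
      1 < (⨆ ε : ℝ, exp (-ε) * (p₁ - δ i ε)) +
          (⨆ ε : ℝ, exp (-ε) * (1 - p₂ - δ i ε))) :
    ∀ X' : 𝒳, relρ X X' → g X' = g X := by
  intro X' hrel
  obtain ⟨i, hi⟩ := (hdecomp X X').1 hrel
  have hprofile (ε : ℝ) : hsDiv (exp ε) (M X) (M X') ≤ δ i ε :=
    hδ i ε ▸ hsDiv_le_privacyProfile hM hi ε
  have integral_one_sub (Y : 𝒳) (j : Fin C) :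
      ∫ z, (1 - φ j z) ∂(M Y) = 1 - ∫ z, φ j z ∂(M Y) := by
    rw [integral_sub (integrable_const 1)
      (Integrable.of_mem_Icc 0 1 (hφmeas j).aemeasurable (.of_forall (hφrange j))),
      integral_const, probReal_univ, one_smul]
  have top_lower := iSup_exp_neg_mul_le_integral (hφmeas c₁) (hφrange c₁) hmaj hprofile
  have rest_upper (j : Fin C) (hj : j ≠ c₁) :
      ⨆ ε, exp (-ε) * (1 - p₂ - δ i ε) ≤ 1 - ∫ z, φ j z ∂(M X') := by
    rw [← integral_one_sub]
    refine iSup_exp_neg_mul_le_integral ((hφmeas j).const_sub 1)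
      (fun z => ⟨sub_nonneg.2 (hφrange j z).2, sub_le_self 1 (hφrange j z).1⟩) ?_ hprofile
    linarith [integral_one_sub X j, hmin j hj]
  by_contra hne
  rw [hc₁] at hne
  linarith [rest_upper (g X') hne, hg X' c₁, hcond i]

/-- Certification via the dual formulation of privacy: let `g` be the
smoothed classifier induced by a mechanism `M` and tests `φ₁,…,φ_C` summing to one,
`≈_ρ` a relation decomposing as the union of relations `≈_{ρ_1},…,≈_{ρ_N}` with privacy
profiles `δ_i`, and `X` an input predicted as `c₁` with probability bounds
`p₁ > p₂`. If `min_i [sup_ε e^{−ε}(p₁ − δ_i(ε)) + sup_ε e^{−ε}(1 − p₂ − δ_i(ε))] > 1`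
then `g(X') = g(X)` for every `X'` with `X ≈_ρ X'`. -/
theorem smoothed_classifier_robust
    {𝒳 Z : Type*} [MeasurableSpace Z]
    (M : 𝒳 → Measure Z) (hM : ∀ X, IsProbabilityMeasure (M X))
    (C : ℕ) (φ : Fin C → Z → ℝ)
    (hφmeas : ∀ i, Measurable (φ i))
    (hφrange : ∀ i z, φ i z ∈ Icc (0 : ℝ) 1)
    (hφsum : ∀ z, ∑ i, φ i z = 1)
    (g : 𝒳 → Fin C)
    (hg : ∀ X i, (∫ z, φ i z ∂(M X)) ≤ ∫ z, φ (g X) z ∂(M X))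
    (N : ℕ) (relρ : 𝒳 → 𝒳 → Prop) (rels : Fin N → 𝒳 → 𝒳 → Prop)
    (hdecomp : ∀ X X', relρ X X' ↔ ∃ i, rels i X X')
    (δ : Fin N → ℝ → ℝ)
    (hδ : ∀ i ε, δ i ε = privacyProfile M (rels i) ε)
    (X : 𝒳) (c₁ : Fin C)
    (hc₁ : g X = c₁)
    (p₁ p₂ : ℝ)
    (hp₁ : p₁ ∈ Icc (0 : ℝ) 1) (hp₂ : p₂ ∈ Icc (0 : ℝ) 1) (hp : p₂ < p₁)
    (hmaj : p₁ ≤ ∫ z, φ c₁ z ∂(M X))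
    (hmin : ∀ i, i ≠ c₁ → (∫ z, φ i z ∂(M X)) ≤ p₂)
    (hcond : ∀ i : Fin N,
      1 < (⨆ ε : ℝ, exp (-ε) * (p₁ - δ i ε)) +
          (⨆ ε : ℝ, exp (-ε) * (1 - p₂ - δ i ε))) :
    ∀ X' : 𝒳, relρ X X' → g X' = g X :=
  smoothed_classifier_robust_general M hM C φ hφmeas hφrange g hg N relρ rels hdecomp δ hδ X c₁ hc₁
    p₁ p₂ hmaj hmin hcond
end
end

section
/- Let M be a randomized mechanism on 𝒳 and ≈ a neighboring relation with at least one related pair. Define ĥ : [0,1] → [0,1] by ĥ(α) = inf_{X ≈ X'} Λ(M(X)‖M(X'))(α). Then the restriction to [0,1] of the convex biconjugate of the +∞-extension of ĥ to ℝ is a tradeoff function (it is convex, continuous, non-increasing, nonnegative, and bounded above by 1 − α), and it is the optimal tradeoff function of M with respect to ≈. -/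
open MeasureTheory Real Set

noncomputable section

/-- The pointwise infimum of tradeoff functions over all neighboring pairs. -/
def infTradeoff {𝒳 Z : Type*} [MeasurableSpace Z] (M : 𝒳 → Measure Z)
    (rel : 𝒳 → 𝒳 → Prop) (α : ℝ) : ℝ :=
  sInf {x : ℝ | ∃ X X' : 𝒳, rel X X' ∧ x = tradeoff (M X) (M X') α}

/-- The convex biconjugate of the `+∞`-extension of a real-valued function on `[0,1]`:
`h**(x) = sup_{s ∈ ℝ} (x·s − h*(s))`, with `h*` the conjugate over the domain `[0,1]`. -/
def biconjOn01 (h : ℝ → ℝ) (x : ℝ) : ℝ :=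
  ⨆ s : ℝ, (x * s - conjOn01 h s)


section AuxBiconj

open Filter Topology

variable {h : ℝ → ℝ}

lemma conjSet_nonempty (s : ℝ) :
    {y : ℝ | ∃ x ∈ Icc (0:ℝ) 1, y = s * x - h x}.Nonempty :=
  ⟨s * 0 - h 0, 0, by simp, rfl⟩

lemma conjSet_bddAbove (h0 : ∀ x ∈ Icc (0:ℝ) 1, 0 ≤ h x) (s : ℝ) :
    BddAbove {y : ℝ | ∃ x ∈ Icc (0:ℝ) 1, y = s * x - h x} := by
  refine ⟨|s|, ?_⟩
  rintro y ⟨x, hx, rfl⟩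
  have h1 : s * x ≤ |s| := by
    calc s * x ≤ |s * x| := le_abs_self _
      _ = |s| * |x| := abs_mul s x
      _ ≤ |s| * 1 := by
          refine mul_le_mul_of_nonneg_left ?_ (abs_nonneg s)
          rw [abs_of_nonneg hx.1]; exact hx.2
      _ = |s| := mul_one _
  linarith [h0 x hx]

lemma le_conj (h0 : ∀ x ∈ Icc (0:ℝ) 1, 0 ≤ h x) {x : ℝ} (hx : x ∈ Icc (0:ℝ) 1) (s : ℝ) :
    s * x - h x ≤ conjOn01 h s :=
  le_csSup (conjSet_bddAbove h0 s) ⟨x, hx, rfl⟩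

lemma conj_le {B s : ℝ} (hB : ∀ x ∈ Icc (0:ℝ) 1, s * x - h x ≤ B) : conjOn01 h s ≤ B :=
  csSup_le (conjSet_nonempty s) (by rintro y ⟨x, hx, rfl⟩; exact hB x hx)

variable (h0 : ∀ x ∈ Icc (0:ℝ) 1, 0 ≤ h x) (h1le : ∀ x ∈ Icc (0:ℝ) 1, h x ≤ 1 - x)

include h0 h1le

lemma h_one_eq : h 1 = 0 := by
  have a := h0 1 (by norm_num)
  have b := h1le 1 (by norm_num)
  linarith

lemma s_le_conj (s : ℝ) : s ≤ conjOn01 h s := by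
  have := le_conj h0 (show (1:ℝ) ∈ Icc (0:ℝ) 1 by norm_num) s
  rw [h_one_eq h0 h1le] at this
  linarith

omit h1le in
lemma conj_zero_nonpos : conjOn01 h 0 ≤ 0 :=
  conj_le (fun x hx => by linarith [h0 x hx])

lemma biconj_term_le {x : ℝ} (hx : x ∈ Icc (0:ℝ) 1) (s : ℝ) :
    x * s - conjOn01 h s ≤ 1 - x := by
  rcases le_or_gt (-1) s with hs | hs
  · have hc := s_le_conj h0 h1le s
    nlinarith [hx.1, hx.2]
  · have hc : -h 0 ≤ conjOn01 h s := by
      have := le_conj h0 (show (0:ℝ) ∈ Icc (0:ℝ) 1 by norm_num) s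
      simpa using this
    have h01 : h 0 ≤ 1 := by simpa using h1le 0 (by norm_num)
    nlinarith [hx.1, hx.2]

lemma biconj_bddAbove {x : ℝ} (hx : x ∈ Icc (0:ℝ) 1) :
    BddAbove (Set.range fun s : ℝ => x * s - conjOn01 h s) := by
  refine ⟨1 - x, ?_⟩
  rintro y ⟨s, rfl⟩
  exact biconj_term_le h0 h1le hx s

lemma le_biconj {x : ℝ} (hx : x ∈ Icc (0:ℝ) 1) (s : ℝ) :
    x * s - conjOn01 h s ≤ biconjOn01 h x :=
  le_ciSup (biconj_bddAbove h0 h1le hx) s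

lemma biconj_le_one_sub {x : ℝ} (hx : x ∈ Icc (0:ℝ) 1) :
    biconjOn01 h x ≤ 1 - x :=
  ciSup_le (biconj_term_le h0 h1le hx)

lemma biconj_nonneg {x : ℝ} (hx : x ∈ Icc (0:ℝ) 1) :
    0 ≤ biconjOn01 h x := by
  have h1 := le_biconj h0 h1le hx 0
  have h2 := conj_zero_nonpos h0
  linarith

omit h1le in
lemma biconj_le_self {x : ℝ} (hx : x ∈ Icc (0:ℝ) 1) :
    biconjOn01 h x ≤ h x := by
  refine ciSup_le fun s => ?_
  have := le_conj h0 hx s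
  linarith [mul_comm x s]

lemma biconj_convexOn : ConvexOn ℝ (Icc (0:ℝ) 1) (biconjOn01 h) := by
  refine ⟨convex_Icc 0 1, ?_⟩
  intro x hx y hy a b ha hb hab
  simp only [smul_eq_mul]
  show biconjOn01 h (a * x + b * y) ≤ _
  refine ciSup_le fun s => ?_
  have hx' := le_biconj h0 h1le hx s
  have hy' := le_biconj h0 h1le hy s
  have key : (a*x + b*y)*s - conjOn01 h s
      = a*(x*s - conjOn01 h s) + b*(y*s - conjOn01 h s) := by
    linear_combination (conjOn01 h s) * hab
  calc (a*x + b*y)*s - conjOn01 h s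
      = a*(x*s - conjOn01 h s) + b*(y*s - conjOn01 h s) := key
    _ ≤ a * biconjOn01 h x + b * biconjOn01 h y :=
        add_le_add (mul_le_mul_of_nonneg_left hx' ha) (mul_le_mul_of_nonneg_left hy' hb)

lemma biconj_antitoneOn_s3 : AntitoneOn (biconjOn01 h) (Icc (0:ℝ) 1) := by
  intro x hx y hy hxy
  show biconjOn01 h y ≤ biconjOn01 h x
  refine ciSup_le fun s => ?_
  rcases le_or_gt s 0 with hs | hs
  · have h1 : y * s ≤ x * s := mul_le_mul_of_nonpos_right hxy hs
    have := le_biconj h0 h1le hx s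
    linarith
  · have h1 := s_le_conj h0 h1le s
    have h2 : y * s - conjOn01 h s ≤ 0 := by nlinarith [hy.2]
    exact h2.trans (biconj_nonneg h0 h1le hx)

lemma biconj_continuousOn : ContinuousOn (biconjOn01 h) (Icc (0:ℝ) 1) := by
  set F := biconjOn01 h with hF
  have hF0 : F 0 ≤ 1 := by have := biconj_le_one_sub h0 h1le (show (0:ℝ) ∈ Icc (0:ℝ) 1 by norm_num); linarith
  intro x hx
  rw [Metric.continuousWithinAt_iff]
  intro ε hε
  -- near-optimal slope s₀
  have hlt : F x - ε/2 < F x := by linarith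
  have hrange : (Set.range fun s : ℝ => x * s - conjOn01 h s).Nonempty := ⟨_, 0, rfl⟩
  obtain ⟨t, ⟨s₀, rfl⟩, hs₀⟩ := exists_lt_of_lt_csSup hrange hlt
  set A := |s₀| + 1 with hA
  have hApos : 0 < A := by positivity
  have lower : ∀ y ∈ Icc (0:ℝ) 1, |y - x| < ε/(2*A) → F x - F y < ε := by
    intro y hy hyd
    have l1 : y * s₀ - conjOn01 h s₀ ≤ F y := le_biconj h0 h1le hy s₀
    have l2 : (y - x) * s₀ ≥ -(|y - x| * A) := by
      have : |(y - x) * s₀| ≤ |y - x| * A := by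
        rw [abs_mul]
        have : |s₀| ≤ A := by simp [hA]
        nlinarith [abs_nonneg (y - x), abs_nonneg s₀]
      linarith [neg_abs_le ((y - x) * s₀)]
    have l3 : |y - x| * A < ε/2 := by
      calc |y - x| * A < (ε/(2*A)) * A := mul_lt_mul_of_pos_right hyd hApos
        _ = ε/2 := by field_simp
    have : y * s₀ - conjOn01 h s₀ = (x * s₀ - conjOn01 h s₀) + (y - x) * s₀ := by ring
    nlinarith
  rcases eq_or_lt_of_le hx.1 with hx0 | hx0
  · -- x = 0
    subst hx0
    refine ⟨ε/(2*A), by positivity, ?_⟩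
    intro y hy hyd
    rw [Real.dist_eq] at hyd ⊢
    have hu : F y ≤ F 0 := biconj_antitoneOn_s3 h0 h1le (by norm_num) hy hy.1
    have hl := lower y hy hyd
    rw [abs_lt]
    exact ⟨by linarith, by linarith⟩
  · -- x > 0
    refine ⟨min (ε/(2*A)) (x*ε/2), by positivity, ?_⟩
    intro y hy hyd
    rw [Real.dist_eq] at hyd ⊢
    have hd1 : |y - x| < ε/(2*A) := lt_of_lt_of_le hyd (min_le_left _ _)
    have hd2 : |y - x| < x*ε/2 := lt_of_lt_of_le hyd (min_le_right _ _)
    have hl := lower y hy hd1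
    have hu : F y - F x < ε := by
      rcases le_or_gt x y with hxy | hxy
      · have : F y ≤ F x := biconj_antitoneOn_s3 h0 h1le hx hy hxy
        linarith
      · -- y < x : convexity through 0 and x
        have hy0 : (0:ℝ) ≤ y := hy.1
        have hcv := (biconj_convexOn h0 h1le).2 (show (0:ℝ) ∈ Icc (0:ℝ) 1 by norm_num) hx
          (show (0:ℝ) ≤ 1 - y/x by
            rw [sub_nonneg, div_le_one hx0]; exact le_of_lt hxy)
          (show (0:ℝ) ≤ y/x from div_nonneg hy0 (le_of_lt hx0))
          (by ring)
        simp only [smul_eq_mul, mul_zero, zero_add] at hcv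
        have hyx : y/x * x = y := div_mul_cancel₀ y (ne_of_gt hx0)
        rw [hyx] at hcv
        -- F y ≤ (1 - y/x) * F 0 + y/x * F x
        have hFx0 : 0 ≤ F x := biconj_nonneg h0 h1le hx
        have hfrac : 1 - y/x = (x - y)/x := by field_simp
        have habs : x - y ≤ |y - x| := by rw [abs_sub_comm]; exact le_abs_self _
        have hxy' : (x - y)/x < ε/2 := by
          rw [div_lt_iff₀ hx0]
          calc x - y ≤ |y - x| := habs
            _ < x*ε/2 := hd2
            _ = ε/2*x := by ring
        have h01 : (1 - y/x) * F 0 ≤ (1 - y/x) * 1 := by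
          apply mul_le_mul_of_nonneg_left hF0
          rw [sub_nonneg, div_le_one hx0]; exact le_of_lt hxy
        have h02 : y/x * F x ≤ 1 * F x := by
          apply mul_le_mul_of_nonneg_right _ hFx0
          rw [div_le_one hx0]; exact le_of_lt hxy
        calc F y - F x ≤ (1 - y/x) * F 0 + y/x * F x - F x := by linarith
          _ ≤ (1 - y/x) * 1 + 1 * F x - F x := by linarith
          _ = (x - y)/x := by rw [← hfrac]; ring
          _ < ε/2 := hxy'
          _ < ε := by linarith
    rw [abs_lt]
    exact ⟨by linarith, hu⟩

omit h0 h1le in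
lemma exists_subgradient {g : ℝ → ℝ} (hg : ConvexOn ℝ (Icc (0:ℝ) 1) g) {x : ℝ}
    (hx : x ∈ Ioo (0:ℝ) 1) :
    ∃ s : ℝ, ∀ y ∈ Icc (0:ℝ) 1, g x + s * (y - x) ≤ g y := by
  set T := {t : ℝ | ∃ y ∈ Ico (0:ℝ) x, t = (g x - g y) / (x - y)} with hT
  have hne : T.Nonempty := ⟨(g x - g 0)/(x - 0), 0, ⟨le_refl 0, hx.1⟩, rfl⟩
  have hbdd : BddAbove T := by
    refine ⟨(g 1 - g x)/(1 - x), ?_⟩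
    rintro t ⟨y, hy, rfl⟩
    exact hg.slope_mono_adjacent ⟨hy.1, le_of_lt (hy.2.trans hx.2)⟩
      (right_mem_Icc.2 zero_le_one) hy.2 hx.2
  refine ⟨sSup T, fun y hy => ?_⟩
  rcases lt_trichotomy y x with hlt | heq | hgt
  · have hle : (g x - g y)/(x - y) ≤ sSup T := le_csSup hbdd ⟨y, ⟨hy.1, hlt⟩, rfl⟩
    have hxy : 0 < x - y := by linarith
    rw [div_le_iff₀ hxy] at hle
    nlinarith
  · subst heq; simp
  · have hle : sSup T ≤ (g y - g x)/(y - x) := by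
      refine csSup_le hne ?_
      rintro t ⟨y', hy', rfl⟩
      exact hg.slope_mono_adjacent ⟨hy'.1, by linarith [hy'.2, hx.2]⟩ hy hy'.2 hgt
    have hxy : 0 < y - x := by linarith
    rw [le_div_iff₀ hxy] at hle
    nlinarith

lemma le_biconj_of_convex {g : ℝ → ℝ} (hgconv : ConvexOn ℝ (Icc (0:ℝ) 1) g)
    (hgcont : ContinuousOn g (Icc (0:ℝ) 1)) (hg1 : g 1 ≤ 0)
    (hgle : ∀ x ∈ Icc (0:ℝ) 1, g x ≤ h x) :
    ∀ x ∈ Icc (0:ℝ) 1, g x ≤ biconjOn01 h x := by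
  have hint : ∀ x ∈ Ioo (0:ℝ) 1, g x ≤ biconjOn01 h x := by
    intro x hx
    have hx' : x ∈ Icc (0:ℝ) 1 := Ioo_subset_Icc_self hx
    obtain ⟨s, hs⟩ := exists_subgradient hgconv hx
    have hco : conjOn01 h s ≤ s * x - g x := by
      refine conj_le fun y hy => ?_
      have h1 := hs y hy
      have h2 := hgle y hy
      nlinarith
    have := le_biconj h0 h1le hx' s
    nlinarith [mul_comm x s]
  intro x hx
  rcases eq_or_lt_of_le hx.1 with hx0 | hx0
  · -- x = 0
    rw [← hx0]
    haveI : (𝓝[Ioo (0:ℝ) 1] (0:ℝ)).NeBot := by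
      refine mem_closure_iff_nhdsWithin_neBot.mp ?_
      rw [closure_Ioo (by norm_num : (0:ℝ) ≠ 1)]
      exact ⟨le_refl 0, zero_le_one⟩
    have t1 : Tendsto g (𝓝[Ioo (0:ℝ) 1] (0:ℝ)) (𝓝 (g 0)) :=
      ((hgcont 0 (by norm_num)).mono Ioo_subset_Icc_self).tendsto
    have t2 : Tendsto (biconjOn01 h) (𝓝[Ioo (0:ℝ) 1] (0:ℝ)) (𝓝 (biconjOn01 h 0)) :=
      ((biconj_continuousOn h0 h1le 0 (by norm_num)).mono Ioo_subset_Icc_self).tendsto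
    refine le_of_tendsto_of_tendsto t1 t2 ?_
    filter_upwards [eventually_mem_nhdsWithin] with y hy
    exact hint y hy
  · rcases eq_or_lt_of_le hx.2 with hx1 | hx1
    · rw [hx1]
      exact hg1.trans (biconj_nonneg h0 h1le (by norm_num))
    · exact hint x ⟨hx0, hx1⟩

end AuxBiconj

section AuxTradeoff

variable {Z : Type*} [MeasurableSpace Z]

lemma const_mem_tradeoffSet (P Q : Measure Z) [IsProbabilityMeasure P] [IsProbabilityMeasure Q]
    {α : ℝ} (hα : α ∈ Icc (0:ℝ) 1) :
    (1 - α) ∈ {x : ℝ | ∃ φ : Z → ℝ, Measurable φ ∧ (∀ z, φ z ∈ Icc (0 : ℝ) 1) ∧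
      (∫ z, φ z ∂P) = α ∧ x = ∫ z, (1 - φ z) ∂Q} := by
  refine ⟨fun _ => α, measurable_const, fun _ => hα, by simp, by simp⟩

lemma tradeoffSet_nonneg (P Q : Measure Z) (α : ℝ) :
    ∀ x ∈ {x : ℝ | ∃ φ : Z → ℝ, Measurable φ ∧ (∀ z, φ z ∈ Icc (0 : ℝ) 1) ∧
      (∫ z, φ z ∂P) = α ∧ x = ∫ z, (1 - φ z) ∂Q}, 0 ≤ x := by
  rintro x ⟨φ, hm, hr, he, rfl⟩
  refine integral_nonneg fun z => ?_
  have := (hr z).2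
  simp only [Pi.zero_apply]
  linarith

lemma tradeoff_nonneg (P Q : Measure Z) (α : ℝ) : 0 ≤ tradeoff P Q α :=
  Real.sInf_nonneg (tradeoffSet_nonneg P Q α)

lemma tradeoff_le_one_sub (P Q : Measure Z) [IsProbabilityMeasure P] [IsProbabilityMeasure Q]
    {α : ℝ} (hα : α ∈ Icc (0:ℝ) 1) : tradeoff P Q α ≤ 1 - α :=
  csInf_le ⟨0, tradeoffSet_nonneg P Q α⟩ (const_mem_tradeoffSet P Q hα)

end AuxTradeoff

section AuxInf

variable {𝒳 Z : Type*} [MeasurableSpace Z] (M : 𝒳 → Measure Z)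
  (hM : ∀ X, IsProbabilityMeasure (M X)) (rel : 𝒳 → 𝒳 → Prop)
  (hrel : ∃ X X', rel X X')

lemma infTradeoff_nonneg (α : ℝ) : 0 ≤ infTradeoff M rel α := by
  refine Real.sInf_nonneg ?_
  rintro x ⟨X, X', hXX', rfl⟩
  exact tradeoff_nonneg _ _ _

include hrel in
lemma infTradeoff_le_one_sub (hM : ∀ X, IsProbabilityMeasure (M X))
    {α : ℝ} (hα : α ∈ Icc (0:ℝ) 1) : infTradeoff M rel α ≤ 1 - α := by
  obtain ⟨X, X', hXX'⟩ := hrel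
  haveI := hM X; haveI := hM X'
  refine csInf_le_of_le ⟨0, ?_⟩ ⟨X, X', hXX', rfl⟩ (tradeoff_le_one_sub _ _ hα)
  rintro x ⟨Y, Y', hYY', rfl⟩
  exact tradeoff_nonneg _ _ _

lemma infTradeoff_le_tradeoff {X X' : 𝒳} (hXX' : rel X X') (α : ℝ) :
    infTradeoff M rel α ≤ tradeoff (M X) (M X') α := by
  refine csInf_le ⟨0, ?_⟩ ⟨X, X', hXX', rfl⟩
  rintro x ⟨Y, Y', hYY', rfl⟩
  exact tradeoff_nonneg _ _ _

include hrel in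
lemma fDP_le_infTradeoff {g : ℝ → ℝ} (hg : fDP M rel g) {α : ℝ} (hα : α ∈ Icc (0:ℝ) 1) :
    g α ≤ infTradeoff M rel α := by
  obtain ⟨X, X', hXX'⟩ := hrel
  refine le_csInf ⟨_, X, X', hXX', rfl⟩ ?_
  rintro x ⟨Y, Y', hYY', rfl⟩
  exact hg Y Y' hYY' α hα

end AuxInf

/-- the restriction to `[0,1]` of the convex biconjugate of the
`+∞`-extension of `ĥ(α) = inf_{X ≈ X'} Λ(M(X)‖M(X'))(α)` is a tradeoff function
(convex, continuous, non-increasing, nonnegative and bounded by `1 − α`), and it is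
the optimal tradeoff function of `M` with respect to `≈`. -/
theorem biconj_infTradeoff_isOptimal
    {𝒳 Z : Type*} [MeasurableSpace Z] (M : 𝒳 → Measure Z)
    (hM : ∀ X, IsProbabilityMeasure (M X)) (rel : 𝒳 → 𝒳 → Prop)
    (hrel : ∃ X X', rel X X') :
    IsTradeoffFun (biconjOn01 (infTradeoff M rel)) ∧
      IsOptimalTradeoff M rel (biconjOn01 (infTradeoff M rel)) := by
  set h := infTradeoff M rel with hh
  have h0 : ∀ x ∈ Icc (0:ℝ) 1, 0 ≤ h x := fun x _ => infTradeoff_nonneg M rel x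
  have h1le : ∀ x ∈ Icc (0:ℝ) 1, h x ≤ 1 - x := fun x hx =>
    infTradeoff_le_one_sub M rel hrel hM hx
  have htf : IsTradeoffFun (biconjOn01 h) := by
    refine ⟨biconj_convexOn h0 h1le, biconj_continuousOn h0 h1le,
      biconj_antitoneOn_s3 h0 h1le, fun α hα => ?_⟩
    have hnn := biconj_nonneg h0 h1le hα
    have hle := biconj_le_one_sub h0 h1le hα
    exact ⟨⟨hnn, by linarith [hα.1]⟩, hle⟩
  have hfdp : fDP M rel (biconjOn01 h) := by
    intro X X' hXX' α hα
    exact (biconj_le_self h0 hα).trans (infTradeoff_le_tradeoff M rel hXX' α)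
  refine ⟨htf, htf, hfdp, ?_⟩
  intro g hg hgdp α hα
  have hgle : ∀ x ∈ Icc (0:ℝ) 1, g x ≤ h x := fun x hx =>
    fDP_le_infTradeoff M rel hrel hgdp hx
  have hg1 : g 1 ≤ 0 := by
    have := (hg.2.2.2 1 (by norm_num)).2
    linarith
  exact le_biconj_of_convex h0 h1le hg.1 hg.2.1 hg1 hgle α hα
end
end

section
/- Let M be a randomized mechanism on 𝒳, let ∼ be a relation on 𝒳, and let ∼^op be the opposite relation defined by X ∼^op X' if and only if X' ∼ X. If f is the optimal tradeoff function of M with respect to ∼ and f^op is the optimal tradeoff function of M with respect to ∼^op, then f^op equals the left-continuous inverse f^{-1} of f. -/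
/-!
Swapping the roles of the two hypotheses turns a test `φ` of `M X'` against `M X` at level `α`
with type II error `t` into the test `1 - φ` of `M X` against `M X'` at level `t` with type II
error `α`. Hence if `M` is `f`-DP for `∼` it is `f⁻¹`-DP for `∼^op`, and `f⁻¹` is again a
tradeoff function. Optimality then gives `f⁻¹ ≤ f^op` and `(f^op)⁻¹ ≤ f`; since `g ↦ g⁻¹` is
monotone and `g ≤ (g⁻¹)⁻¹`, we get `f^op ≤ ((f^op)⁻¹)⁻¹ ≤ f⁻¹`.
-/

open MeasureTheory Real Set

noncomputable section

lemma AntitoneOn.continuousOn_Icc_of_surjOn {α β : Type*} [LinearOrder α]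
    [TopologicalSpace α] [OrderTopology α] [LinearOrder β]
    [TopologicalSpace β] [OrderTopology β] [DenselyOrdered β]
    {g : α → β} {a b : α} {c d : β} (hg : AntitoneOn g (Icc a b))
    (hmaps : MapsTo g (Icc a b) (Icc c d)) (hsurj : SurjOn g (Icc a b) (Icc c d)) :
    ContinuousOn g (Icc a b) := by
  rw [continuousOn_iff_continuous_domRestrict]
  let F : Icc a b → (Icc c d)ᵒᵈ := fun x => OrderDual.toDual ⟨g x, hmaps x.2⟩
  have hF : Continuous F := by
    refine Monotone.continuous_of_surjective (fun x y hxy => hg x.2 y.2 hxy) fun y => ?_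
    obtain ⟨x, hx, hgx⟩ := hsurj (OrderDual.ofDual y).2
    exact ⟨⟨x, hx⟩, Subtype.ext hgx⟩
  exact continuous_subtype_val.comp (continuous_ofDual.comp hF)

lemma integral_mem_Icc_of_mem_Icc {Z : Type*} [MeasurableSpace Z] {μ : Measure Z}
    [IsProbabilityMeasure μ] {φ : Z → ℝ} (hφ : ∀ z, φ z ∈ Icc (0 : ℝ) 1) :
    ∫ z, φ z ∂μ ∈ Icc (0 : ℝ) 1 := by
  refine ⟨integral_nonneg fun z => (hφ z).1, ?_⟩
  calc ∫ z, φ z ∂μ ≤ ∫ _, (1 : ℝ) ∂μ :=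
        integral_mono_of_nonneg (ae_of_all _ fun z => (hφ z).1) (integrable_const 1)
          (ae_of_all _ fun z => (hφ z).2)
    _ = 1 := by simp

namespace IsTradeoffFun

variable {f : ℝ → ℝ}

lemma apply_one (hf : IsTradeoffFun f) : f 1 = 0 := by
  obtain ⟨⟨hnonneg, -⟩, hle⟩ := hf.2.2.2 1 ⟨zero_le_one, le_rfl⟩
  linarith

lemma apply_lt_apply (hf : IsTradeoffFun f) {s t : ℝ} (hs : 0 ≤ s) (hst : s < t) (ht : t ≤ 1)
    (hfs : 0 < f s) : f t < f s := by
  rcases ht.lt_or_eq with ht | rfl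
  · have hslope := hf.1.slope_mono_adjacent ⟨hs, hst.le.trans ht.le⟩ ⟨zero_le_one, le_rfl⟩ hst ht
    rw [hf.apply_one] at hslope
    by_contra! hfst
    have hleft : 0 ≤ (f t - f s) / (t - s) := div_nonneg (by linarith) (by linarith)
    have hright : (0 - f t) / (1 - t) < 0 := div_neg_of_neg_of_pos (by linarith) (by linarith)
    linarith
  · rwa [hf.apply_one]

end IsTradeoffFun

section LeftInv

variable {g h : ℝ → ℝ} {α β t : ℝ}

lemma bddBelow_leftInv_set : BddBelow {t : ℝ | t ∈ Icc (0 : ℝ) 1 ∧ g t ≤ α} :=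
  ⟨0, fun _ ht => ht.1.1⟩

lemma leftInv_le (ht : t ∈ Icc (0 : ℝ) 1) (hgt : g t ≤ α) : leftInv g α ≤ t :=
  csInf_le bddBelow_leftInv_set ⟨ht, hgt⟩

lemma le_leftInv (hg1 : g 1 ≤ α) {c : ℝ} (h : ∀ t ∈ Icc (0 : ℝ) 1, g t ≤ α → c ≤ t) :
    c ≤ leftInv g α :=
  le_csInf ⟨1, ⟨zero_le_one, le_rfl⟩, hg1⟩ fun t ht => h t ht.1 ht.2

lemma leftInv_antitone (hg1 : g 1 ≤ α) (hαβ : α ≤ β) : leftInv g β ≤ leftInv g α :=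
  le_leftInv hg1 fun _ ht hgt => leftInv_le ht (hgt.trans hαβ)

lemma leftInv_le_leftInv (hgh : ∀ t ∈ Icc (0 : ℝ) 1, g t ≤ h t) (hh1 : h 1 ≤ α) :
    leftInv g α ≤ leftInv h α :=
  le_leftInv hh1 fun t ht hht => leftInv_le ht ((hgh t ht).trans hht)

lemma leftInv_mem (hg : ContinuousOn g (Icc 0 1)) (hg1 : g 1 ≤ α) :
    leftInv g α ∈ Icc (0 : ℝ) 1 ∧ g (leftInv g α) ≤ α :=
  (hg.preimage_isClosed_of_isClosed isClosed_Icc isClosed_Iic).csInf_mem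
    ⟨1, ⟨zero_le_one, le_rfl⟩, hg1⟩ bddBelow_leftInv_set

end LeftInv

namespace IsTradeoffFun

variable {f : ℝ → ℝ} {α t : ℝ}

lemma leftInv_mem (hf : IsTradeoffFun f) (hα : 0 ≤ α) :
    leftInv f α ∈ Icc (0 : ℝ) 1 ∧ f (leftInv f α) ≤ α :=
  _root_.leftInv_mem hf.2.1 (hf.apply_one ▸ hα)

lemma leftInv_apply (hf : IsTradeoffFun f) (ht₀ : 0 ≤ t) (ht : t ≤ leftInv f 0) :
    leftInv f (f t) = t := by
  have ht₁ : t ≤ 1 := ht.trans (hf.leftInv_mem le_rfl).1.2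
  have hf1 : f 1 ≤ f t := hf.apply_one ▸ (hf.2.2.2 t ⟨ht₀, ht₁⟩).1.1
  refine le_antisymm (leftInv_le ⟨ht₀, ht₁⟩ le_rfl) (le_leftInv hf1 fun s hs hfs => ?_)
  by_contra! hst
  have hfs_pos : 0 < f s := by
    by_contra! hfs_nonpos
    exact (hst.trans_le ht).not_ge (leftInv_le hs hfs_nonpos)
  exact (hf.apply_lt_apply hs.1 hst ht₁ hfs_pos).not_ge hfs

lemma antitoneOn_leftInv (hf : IsTradeoffFun f) : AntitoneOn (leftInv f) (Icc 0 1) :=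
  fun _ hα _ _ hαβ => leftInv_antitone (hf.apply_one ▸ hα.1) hαβ

lemma convexOn_leftInv (hf : IsTradeoffFun f) : ConvexOn ℝ (Icc 0 1) (leftInv f) := by
  refine ⟨convex_Icc 0 1, fun α hα β hβ a b ha hb hab => ?_⟩
  obtain ⟨hsα, hfsα⟩ := hf.leftInv_mem hα.1
  obtain ⟨hsβ, hfsβ⟩ := hf.leftInv_mem hβ.1
  refine leftInv_le (convex_Icc 0 1 hsα hsβ ha hb hab) ?_
  calc f (a • leftInv f α + b • leftInv f β)
      ≤ a • f (leftInv f α) + b • f (leftInv f β) := hf.1.2 hsα hsβ ha hb hab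
    _ ≤ a • α + b • β := by simp only [smul_eq_mul]; gcongr

/-- `leftInv f` maps `[0,1]` onto `[0, leftInv f 0]`, so being antitone it has no jumps. -/
lemma continuousOn_leftInv (hf : IsTradeoffFun f) : ContinuousOn (leftInv f) (Icc 0 1) := by
  refine hf.antitoneOn_leftInv.continuousOn_Icc_of_surjOn (c := 0) (d := leftInv f 0)
    (fun α hα => ⟨(hf.leftInv_mem hα.1).1.1, leftInv_antitone hf.apply_one.le hα.1⟩)
    fun t ht => ⟨f t, ?_, hf.leftInv_apply ht.1 ht.2⟩
  exact (hf.2.2.2 t ⟨ht.1, ht.2.trans (hf.leftInv_mem le_rfl).1.2⟩).1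

end IsTradeoffFun

lemma isTradeoffFun_leftInv {f : ℝ → ℝ} (hf : IsTradeoffFun f) : IsTradeoffFun (leftInv f) := by
  refine ⟨hf.convexOn_leftInv, hf.continuousOn_leftInv, hf.antitoneOn_leftInv,
    fun α hα => ⟨(hf.leftInv_mem hα.1).1, leftInv_le ⟨by linarith [hα.2], by linarith [hα.1]⟩ ?_⟩⟩
  linarith [(hf.2.2.2 (1 - α) ⟨by linarith [hα.2], by linarith [hα.1]⟩).2]

lemma le_leftInv_leftInv {f : ℝ → ℝ} (hf : IsTradeoffFun f) {α : ℝ} (hα : α ∈ Icc (0 : ℝ) 1) :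
    f α ≤ leftInv (leftInv f) α := by
  refine le_leftInv ((isTradeoffFun_leftInv hf).apply_one ▸ hα.1) fun t ht hle => ?_
  obtain ⟨hs, hfs⟩ := hf.leftInv_mem ht.1
  exact (hf.2.2.1 hs hα hle).trans hfs

section Tradeoff

variable {Z : Type*} [MeasurableSpace Z] {P Q : Measure Z}

lemma tradeoff_le {φ : Z → ℝ} (hφm : Measurable φ) (hφ : ∀ z, φ z ∈ Icc (0 : ℝ) 1) :
    tradeoff P Q (∫ z, φ z ∂P) ≤ ∫ z, (1 - φ z) ∂Q :=
  csInf_le ⟨0, by rintro _ ⟨ψ, -, hψ, -, rfl⟩; exact integral_nonneg fun z => sub_nonneg.2 (hψ z).2⟩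
    ⟨φ, hφm, hφ, rfl, rfl⟩

lemma le_tradeoff [IsProbabilityMeasure P] {α c : ℝ} (hα : α ∈ Icc (0 : ℝ) 1)
    (h : ∀ φ : Z → ℝ, Measurable φ → (∀ z, φ z ∈ Icc (0 : ℝ) 1) → ∫ z, φ z ∂P = α →
      c ≤ ∫ z, (1 - φ z) ∂Q) :
    c ≤ tradeoff P Q α :=
  le_csInf ⟨_, fun _ => α, measurable_const, fun _ => hα, by simp, rfl⟩
    (by rintro _ ⟨φ, hφm, hφ, hφα, rfl⟩; exact h φ hφm hφ hφα)

lemma leftInv_le_tradeoff [IsProbabilityMeasure P] [IsProbabilityMeasure Q] {f : ℝ → ℝ}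
    (hf : ∀ t ∈ Icc (0 : ℝ) 1, f t ≤ tradeoff P Q t) {α : ℝ} (hα : α ∈ Icc (0 : ℝ) 1) :
    leftInv f α ≤ tradeoff Q P α := by
  refine le_tradeoff hα fun φ hφm hφ hφα => ?_
  have hψ : ∀ z, 1 - φ z ∈ Icc (0 : ℝ) 1 :=
    fun z => ⟨sub_nonneg.2 (hφ z).2, sub_le_self _ (hφ z).1⟩
  have hlevel : ∫ z, (1 - φ z) ∂P ∈ Icc (0 : ℝ) 1 := integral_mem_Icc_of_mem_Icc hψ
  refine leftInv_le hlevel ((hf _ hlevel).trans ?_)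
  calc tradeoff P Q (∫ z, (1 - φ z) ∂P) ≤ ∫ z, (1 - (1 - φ z)) ∂Q :=
        tradeoff_le (measurable_const.sub hφm) hψ
    _ = α := by simp only [sub_sub_cancel, hφα]

end Tradeoff

lemma fDP.leftInv_op {𝒳 Z : Type*} [MeasurableSpace Z] {M : 𝒳 → Measure Z}
    (hM : ∀ X, IsProbabilityMeasure (M X)) {rel : 𝒳 → 𝒳 → Prop} {f : ℝ → ℝ}
    (h : fDP M rel f) : fDP M (fun X X' => rel X' X) (leftInv f) := by
  intro X X' hrel α hα
  have := hM X
  have := hM X'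
  exact leftInv_le_tradeoff (h X' X hrel) hα

/-- if `f` is the optimal tradeoff function of `M` with respect to `∼` and
`f^op` the optimal tradeoff function with respect to the opposite relation `∼^op`, then
`f^op` equals the left-continuous inverse `f⁻¹` of `f` on `[0,1]`. -/
theorem optimalTradeoff_op_eq_leftInv
    {𝒳 Z : Type*} [MeasurableSpace Z] (M : 𝒳 → Measure Z)
    (hM : ∀ X, IsProbabilityMeasure (M X)) (rel : 𝒳 → 𝒳 → Prop)
    (f fop : ℝ → ℝ)
    (hf : IsOptimalTradeoff M rel f)
    (hfop : IsOptimalTradeoff M (fun X X' => rel X' X) fop) :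
    ∀ α ∈ Icc (0 : ℝ) 1, fop α = leftInv f α := by
  obtain ⟨hf_tradeoff, hf_dp, hf_opt⟩ := hf
  obtain ⟨hfop_tradeoff, hfop_dp, hfop_opt⟩ := hfop
  have hfop_inv_le : ∀ t ∈ Icc (0 : ℝ) 1, leftInv fop t ≤ f t :=
    hf_opt _ (isTradeoffFun_leftInv hfop_tradeoff) (hfop_dp.leftInv_op hM)
  intro α hα
  refine le_antisymm ?_ (hfop_opt _ (isTradeoffFun_leftInv hf_tradeoff) (hf_dp.leftInv_op hM) α hα)
  calc fop α ≤ leftInv (leftInv fop) α := le_leftInv_leftInv hfop_tradeoff hα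
    _ ≤ leftInv f α := leftInv_le_leftInv hfop_inv_le (hf_tradeoff.apply_one ▸ hα.1)
end
end

section
/- Let 𝕏 ⊆ ℝ be a closed interval and f : 𝕏 → ℝ. Say that a set A ⊆ 𝕏 × ℝ satisfies property (P_𝕏) if for every (x, t) ∈ A and every x̂ ∈ 𝕏 with x̂ ≥ x, one has (x̂, t) ∈ A. If the epigraph epi(f) satisfies (P_𝕏), then the closure of the convex hull of epi(f) also satisfies (P_𝕏). -/
open Set

/-- Property (P_𝕏): a set `A ⊆ 𝕏 × ℝ` is closed under increasing the first coordinate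
within `𝕏`. -/
def PropP (X : Set ℝ) (A : Set (ℝ × ℝ)) : Prop :=
  ∀ p ∈ A, ∀ xhat ∈ X, p.1 ≤ xhat → (xhat, p.2) ∈ A

/-- The epigraph of `f` over `X`. -/
def epiOn (X : Set ℝ) (f : ℝ → ℝ) : Set (ℝ × ℝ) :=
  {p : ℝ × ℝ | p.1 ∈ X ∧ f p.1 ≤ p.2}

/-- Auxiliary: the convex hull of the epigraph already satisfies (P_𝕏). -/
lemma hull_propP (a b : ℝ) (f : ℝ → ℝ)
    (h : PropP (Icc a b) (epiOn (Icc a b) f)) :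
    PropP (Icc a b) (convexHull ℝ (epiOn (Icc a b) f)) := by
  intro p hp xhat hxhat hle
  have hb : b ∈ Icc a b := ⟨hxhat.1.trans hxhat.2, le_refl b⟩
  -- affine map q ↦ (b, q.2)
  set A : (ℝ × ℝ) →ᵃ[ℝ] (ℝ × ℝ) :=
    AffineMap.mk' (fun q : ℝ × ℝ => (b, q.2))
      ((0 : (ℝ × ℝ) →ₗ[ℝ] ℝ).prod (LinearMap.snd ℝ ℝ ℝ)) 0
      (by intro q; simp [Prod.ext_iff]) with hA
  have hAE : A '' (epiOn (Icc a b) f) ⊆ epiOn (Icc a b) f := by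
    rintro q ⟨r, hr, rfl⟩
    have := h r hr b hb (hr.1.2)
    simpa [hA, AffineMap.mk'] using this
  have hbp : (b, p.2) ∈ convexHull ℝ (epiOn (Icc a b) f) := by
    have : A p ∈ A '' (convexHull ℝ (epiOn (Icc a b) f)) := ⟨p, hp, rfl⟩
    rw [AffineMap.image_convexHull] at this
    have h2 := convexHull_mono hAE this
    simpa [hA, AffineMap.mk'] using h2
  rcases eq_or_lt_of_le hle with heq | hlt
  · have : (xhat, p.2) = p := by rw [← heq]
    rw [this]; exact hp
  · have hpb : p.1 < b := lt_of_lt_of_le hlt hxhat.2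
    set θ : ℝ := (xhat - p.1) / (b - p.1) with hθ
    have hθ0 : 0 ≤ θ := div_nonneg (by linarith) (by linarith)
    have hθ1 : θ ≤ 1 := by
      rw [div_le_one (by linarith)]; linarith [hxhat.2]
    have hconv := convex_convexHull ℝ (epiOn (Icc a b) f)
    have hmem := hconv hp hbp (by linarith : (0:ℝ) ≤ 1 - θ) hθ0 (by ring)
    have : (1 - θ) • p + θ • ((b, p.2) : ℝ × ℝ) = (xhat, p.2) := by
      have hne : b - p.1 ≠ 0 := by linarith
      ext
      · simp [hθ]; field_simp; ring
      · simp; ring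
    rwa [this] at hmem

/-- over a closed interval `[a, b]`, if the epigraph of `f` satisfies
property (P_𝕏), then so does the closure of its convex hull. -/
theorem closure_convexHull_epigraph_propP (a b : ℝ) (f : ℝ → ℝ)
    (h : PropP (Icc a b) (epiOn (Icc a b) f)) :
    PropP (Icc a b) (closure (convexHull ℝ (epiOn (Icc a b) f))) := by
  intro p hp xhat hxhat hle
  have hhull := hull_propP a b f h
  set E := epiOn (Icc a b) f with hE
  -- hull E ⊆ Icc a b ×ˢ univ
  have hsub : convexHull ℝ E ⊆ Icc a b ×ˢ (univ : Set ℝ) := by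
    apply convexHull_min
    · intro q hq; exact ⟨hq.1, mem_univ _⟩
    · exact (convex_Icc a b).prod convex_univ
  set ψ : ℝ × ℝ → ℝ × ℝ := fun q => (max q.1 xhat, q.2) with hψ
  have hψc : Continuous ψ := by
    apply Continuous.prodMk
    · exact (continuous_fst.max continuous_const)
    · exact continuous_snd
  have himg : ψ '' (convexHull ℝ E) ⊆ convexHull ℝ E := by
    rintro q ⟨r, hr, rfl⟩
    have hr1 : r.1 ∈ Icc a b := (hsub hr).1
    have hm : max r.1 xhat ∈ Icc a b :=
      ⟨le_max_of_le_right hxhat.1, max_le hr1.2 hxhat.2⟩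
    exact hhull r hr _ hm (le_max_left _ _)
  have : ψ p ∈ closure (ψ '' (convexHull ℝ E)) :=
    (image_closure_subset_closure_image hψc) ⟨p, hp, rfl⟩
  have hmem : ψ p ∈ closure (convexHull ℝ E) :=
    closure_mono himg this
  have : ψ p = (xhat, p.2) := by
    simp [hψ, max_eq_right hle]
  rwa [this] at hmem
end

section
/- Let 𝕏 ⊆ ℝ be a closed interval and let f : 𝕏 → ℝ be monotonically non-increasing. Let f** denote the convex biconjugate of the extension of f to ℝ by the value +∞. Then the restriction of f** to 𝕏 is monotonically non-increasing. -/
open Set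

noncomputable section

/-- The extension of `f : [a,b] → ℝ` to all of `ℝ` by the value `+∞`. -/
def extTop (a b : ℝ) (f : ℝ → ℝ) : ℝ → EReal :=
  fun x => if x ∈ Icc a b then (f x : EReal) else ⊤

/-- Convex conjugate of an `ℝ ∪ {±∞}`-valued function on `ℝ`:
`g*(s) = sup_x (s·x − g(x))`. -/
def econj (g : ℝ → EReal) (s : ℝ) : EReal :=
  ⨆ x : ℝ, ((s * x : ℝ) : EReal) - g x

/-- Convex biconjugate `g** = (g*)*`. -/
def ebiconj (g : ℝ → EReal) (x : ℝ) : EReal :=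
  ⨆ s : ℝ, ((x * s : ℝ) : EReal) - econj g s

/-- if `f` is monotonically non-increasing on the closed interval `[a,b]`,
then the restriction to `[a,b]` of the convex biconjugate of the `+∞`-extension of `f`
is monotonically non-increasing. -/
theorem biconj_antitoneOn (a b : ℝ) (f : ℝ → ℝ) (hf : AntitoneOn f (Icc a b)) :
    AntitoneOn (ebiconj (extTop a b f)) (Icc a b) := by
  intro x hx y hy hxy
  have hab : a ≤ b := le_trans hx.1 hx.2
  have hb : b ∈ Icc a b := ⟨hab, le_refl b⟩
  have hgb : extTop a b f b = (f b : EReal) := if_pos hb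
  -- econj at 0 is at most -f b
  have hconj0 : econj (extTop a b f) 0 ≤ ((-f b : ℝ) : EReal) := by
    apply iSup_le
    intro z
    by_cases hz : z ∈ Icc a b
    · have hfz : f b ≤ f z := hf hz hb hz.2
      simp only [extTop, if_pos hz, zero_mul]
      rw [show ((0 : ℝ) : EReal) - (f z : EReal) = ((0 - f z : ℝ) : EReal) from
        (EReal.coe_sub 0 (f z)).symm]
      exact_mod_cast (by linarith : (0 : ℝ) - f z ≤ -f b)
    · rw [show extTop a b f z = ⊤ from if_neg hz, EReal.sub_top]
      exact bot_le
  -- f b is a lower bound for the biconjugate at x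
  have hFb : (f b : EReal) ≤ ebiconj (extTop a b f) x := by
    refine le_trans ?_ (le_iSup _ (0 : ℝ))
    have : ((x * 0 : ℝ) : EReal) - econj (extTop a b f) 0
        ≥ ((x * 0 : ℝ) : EReal) - ((-f b : ℝ) : EReal) :=
      EReal.sub_le_sub (le_refl _) hconj0
    refine le_trans ?_ this
    rw [← EReal.coe_sub]
    exact_mod_cast (by ring_nf; exact le_refl _ : (f b : ℝ) ≤ x * 0 - (-f b))
  apply iSup_le
  intro s
  rcases le_or_gt s 0 with hs | hs
  · -- s ≤ 0 : compare with the same s in the sup defining ebiconj at x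
    refine le_trans ?_ (le_iSup _ s)
    apply EReal.sub_le_sub _ (le_refl _)
    exact_mod_cast mul_le_mul_of_nonpos_right hxy hs
  · -- s > 0 : bound by f b
    have hlow : ((s * b - f b : ℝ) : EReal) ≤ econj (extTop a b f) s := by
      refine le_trans ?_ (le_iSup _ b)
      rw [hgb, ← EReal.coe_sub]
    calc ((y * s : ℝ) : EReal) - econj (extTop a b f) s
        ≤ ((y * s : ℝ) : EReal) - ((s * b - f b : ℝ) : EReal) :=
          EReal.sub_le_sub (le_refl _) hlow
      _ = ((y * s - (s * b - f b) : ℝ) : EReal) := (EReal.coe_sub _ _)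
      _ ≤ (f b : EReal) := by
          apply EReal.coe_le_coe_iff.mpr
          nlinarith [hy.2]
      _ ≤ ebiconj (extTop a b f) x := hFb
end
end
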